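/- One-dimensional case of Theorem 3.4 (exponential convergence of the truncated PML problem): Assume in addition that f is continuous with support contained in [−R, R]. Then for every x ∈ [−R, R] one has û(x) − u(x) = D₁ e^{−ikx} + D₂ e^{ikx}; moreover there is an absolute constant C > 0 such that if R̂ ≤ 2 and k·σ₀·L ≥ 1, then (∫_{−R}^{R} (|û′(x) − u′(x)|² + k² |û(x) − u(x)|²) dx)^{1/2} ≤ C k e^{−2kσ₀L} (|u(R)|² + |u(−R)|²)^{1/2}. -/

import Mathlib

open MeasureTheory intervalIntegral

noncomputable section

/-- The complex coordinate stretching `t̃`: `t̃ = t` for `|t| ≤ R` and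
`t̃ = t + i σ₀ sgn(t)(|t| − R)` for `|t| > R`. -/
def stretch (σ₀ R t : ℝ) : ℂ :=
  if |t| ≤ R then (t : ℂ) else (t : ℂ) + Complex.I * σ₀ * (Real.sign t * (|t| - R))

/-- `R̂̃ = R̂ + i σ₀ L` where `L = R̂ − R`. -/
def Rtil (σ₀ R Rh : ℝ) : ℂ := (Rh : ℂ) + Complex.I * σ₀ * ((Rh : ℂ) - R)

/-- `J₁ = ∫_{−R̂}^{R̂} e^{−ik t̃(t)} f(t) dt`. -/
def J1 (k σ₀ R Rh : ℝ) (f : ℝ → ℂ) : ℂ :=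
  ∫ t in (-Rh)..Rh, Complex.exp (-(Complex.I * k * stretch σ₀ R t)) * f t

/-- `J₂ = ∫_{−R̂}^{R̂} e^{ik t̃(t)} f(t) dt`. -/
def J2 (k σ₀ R Rh : ℝ) (f : ℝ → ℂ) : ℂ :=
  ∫ t in (-Rh)..Rh, Complex.exp (Complex.I * k * stretch σ₀ R t) * f t

/-- `D₁ = (1/(2ik))(e^{2ik R̂̃} J₂ − J₁)/(e^{2ik R̂̃} − e^{−2ik R̂̃})`. -/
def D1 (k σ₀ R Rh : ℝ) (f : ℝ → ℂ) : ℂ :=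
  (1 / (2 * Complex.I * k)) *
    (Complex.exp (2 * Complex.I * k * Rtil σ₀ R Rh) * J2 k σ₀ R Rh f - J1 k σ₀ R Rh f) /
      (Complex.exp (2 * Complex.I * k * Rtil σ₀ R Rh) -
        Complex.exp (-(2 * Complex.I * k * Rtil σ₀ R Rh)))

/-- `D₂ = (1/(2ik))(e^{2ik R̂̃} J₁ − J₂)/(e^{2ik R̂̃} − e^{−2ik R̂̃})`. -/
def D2 (k σ₀ R Rh : ℝ) (f : ℝ → ℂ) : ℂ :=
  (1 / (2 * Complex.I * k)) *
    (Complex.exp (2 * Complex.I * k * Rtil σ₀ R Rh) * J1 k σ₀ R Rh f - J2 k σ₀ R Rh f) /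
      (Complex.exp (2 * Complex.I * k * Rtil σ₀ R Rh) -
        Complex.exp (-(2 * Complex.I * k * Rtil σ₀ R Rh)))

/-- The truncated PML solution `û` in one dimension. -/
def uhat (k σ₀ R Rh : ℝ) (f : ℝ → ℂ) (x : ℝ) : ℂ :=
  -(1 / (2 * Complex.I * k)) * Complex.exp (-(Complex.I * k * stretch σ₀ R x)) *
      (∫ t in x..Rh, Complex.exp (Complex.I * k * stretch σ₀ R t) * f t)
    - (1 / (2 * Complex.I * k)) * Complex.exp (Complex.I * k * stretch σ₀ R x) *
      (∫ t in (-Rh)..x, Complex.exp (-(Complex.I * k * stretch σ₀ R t)) * f t)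
    + D1 k σ₀ R Rh f * Complex.exp (-(Complex.I * k * stretch σ₀ R x))
    + D2 k σ₀ R Rh f * Complex.exp (Complex.I * k * stretch σ₀ R x)


/-- The exact outgoing solution of the one-dimensional Helmholtz problem:
`u(x) = −(1/(2ik)) e^{−ikx} ∫_x^∞ e^{ikt} f(t) dt − (1/(2ik)) e^{ikx} ∫_{−∞}^x e^{−ikt} f(t) dt`. -/
def usol (k : ℝ) (f : ℝ → ℂ) (x : ℝ) : ℂ :=
  -(1 / (2 * Complex.I * k)) * Complex.exp (-(Complex.I * k * x)) *
      (∫ t in Set.Ioi x, Complex.exp (Complex.I * k * t) * f t)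
    - (1 / (2 * Complex.I * k)) * Complex.exp (Complex.I * k * x) *
      (∫ t in Set.Iio x, Complex.exp (-(Complex.I * k * t)) * f t)

/-! Since `f` vanishes outside `[−R, R]`, where the stretching is the identity, every stretched
integral in `û` equals the corresponding unstretched one. Hence on `[−R, R]` the difference
`û − u` is the plane-wave combination `w = D₁ e^{−ikx} + D₂ e^{ikx}`, whose energy density
`|w′|² + k²|w|² = 2k²(|D₁|² + |D₂|²)` is constant by the parallelogram law. The integrals `J₁`, `J₂`
are `2k u(R)`, `2k u(−R)` up to unimodular factors, and `|e^{2ik R̂̃}| = e^{−2kσ₀L} ≤ 1/2` makes the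
denominator of `D₁`, `D₂` of size `e^{2kσ₀L}`, so `|Dⱼ| ≤ 2 e^{−2kσ₀L} (|u(R)| + |u(−R)|)`. -/

open Set Function Complex Topology

section SupportedIntegrals

variable {E : Type*} [NormedAddCommGroup E] [NormedSpace ℝ E] {g : ℝ → E} {a b : ℝ}

theorem setIntegral_Ioi_eq_intervalIntegral {x : ℝ} (hg : support g ⊆ Iic b) (hx : x ≤ b) :
    ∫ t in Ioi x, g t = ∫ t in x..b, g t := by
  rw [intervalIntegral.integral_of_le hx]
  refine setIntegral_eq_of_subset_of_forall_sdiff_eq_zero measurableSet_Ioi Ioc_subset_Ioi_self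
    fun t ⟨htx, ht⟩ => notMem_support.1 fun hgt => ht ⟨htx, hg hgt⟩

theorem setIntegral_Iio_eq_intervalIntegral {x : ℝ} (hg : support g ⊆ Ioi a) (hx : a ≤ x) :
    ∫ t in Iio x, g t = ∫ t in a..x, g t := by
  rw [intervalIntegral.integral_of_le hx, setIntegral_congr_set Iio_ae_eq_Iic]
  refine setIntegral_eq_of_subset_of_forall_sdiff_eq_zero measurableSet_Iic Ioc_subset_Iic_self
    fun t ⟨htx, ht⟩ => notMem_support.1 fun hgt => ht ⟨hg hgt, htx⟩

theorem setIntegral_Iio_eq_integral (hg : support g ⊆ Iic b) :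
    ∫ t in Iio b, g t = ∫ t, g t := by
  rw [setIntegral_congr_set Iio_ae_eq_Iic]
  exact setIntegral_eq_integral_of_forall_compl_eq_zero fun _ ht =>
    notMem_support.1 (ht <| hg ·)

theorem setIntegral_Ioi_eq_integral (hg : support g ⊆ Ici a) :
    ∫ t in Ioi a, g t = ∫ t, g t := by
  rw [setIntegral_congr_set Ioi_ae_eq_Ici]
  exact setIntegral_eq_integral_of_forall_compl_eq_zero fun _ ht =>
    notMem_support.1 (ht <| hg ·)

theorem setIntegral_Ioi_eq_zero (hg : support g ⊆ Iic b) : ∫ t in Ioi b, g t = 0 :=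
  setIntegral_eq_zero_of_forall_eq_zero fun _ ht =>
    notMem_support.1 fun hgt => (not_le.2 (mem_Ioi.1 ht)) (hg hgt)

theorem setIntegral_Iio_eq_zero (hg : support g ⊆ Ici a) : ∫ t in Iio a, g t = 0 :=
  setIntegral_eq_zero_of_forall_eq_zero fun _ ht =>
    notMem_support.1 fun hgt => (not_le.2 (mem_Iio.1 ht)) (hg hgt)

variable [CompleteSpace E]

theorem hasDerivAt_setIntegral_Ioi (hg : Continuous g) (hsupp : support g ⊆ Iic b) (x : ℝ) :
    HasDerivAt (fun y => ∫ t in Ioi y, g t) (-g x) x := by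
  have hB : x < max b x + 1 := by linarith [le_max_right b x]
  refine (intervalIntegral.integral_hasDerivAt_left (hg.intervalIntegrable x (max b x + 1))
    (hg.stronglyMeasurableAtFilter _ _) hg.continuousAt).congr_of_eventuallyEq ?_
  filter_upwards [Iio_mem_nhds hB] with y hy
  exact setIntegral_Ioi_eq_intervalIntegral
    (hsupp.trans (Iic_subset_Iic.2 (by linarith [le_max_left b x]))) (le_of_lt hy)

theorem hasDerivAt_setIntegral_Iio (hg : Continuous g) (hsupp : support g ⊆ Ioi a) (x : ℝ) :
    HasDerivAt (fun y => ∫ t in Iio y, g t) (g x) x := by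
  have hA : min a x - 1 < x := by linarith [min_le_right a x]
  refine (intervalIntegral.integral_hasDerivAt_right (hg.intervalIntegrable (min a x - 1) x)
    (hg.stronglyMeasurableAtFilter _ _) hg.continuousAt).congr_of_eventuallyEq ?_
  filter_upwards [Ioi_mem_nhds hA] with y hy
  exact setIntegral_Iio_eq_intervalIntegral
    (hsupp.trans (Ioi_subset_Ioi (by linarith [min_le_left a x]))) (le_of_lt hy)

end SupportedIntegrals

section PlaneWaves

def planeWaveSum (A B : ℂ) (k x : ℝ) : ℂ := A * cexp (-(I * k * x)) + B * cexp (I * k * x)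

theorem norm_exp_I_mul_ofReal_mul_ofReal (k x : ℝ) : ‖cexp (I * k * x)‖ = 1 := by
  simp [Complex.norm_exp]

theorem norm_exp_neg_I_mul_ofReal_mul_ofReal (k x : ℝ) : ‖cexp (-(I * k * x))‖ = 1 := by
  simp [Complex.norm_exp]

theorem hasDerivAt_exp_mul_ofReal (c : ℂ) (x : ℝ) :
    HasDerivAt (fun y : ℝ => cexp (c * y)) (c * cexp (c * x)) x := by
  simpa [mul_comm] using (((hasDerivAt_id (x : ℂ)).const_mul c).cexp).comp_ofReal

theorem hasDerivAt_planeWaveSum (A B : ℂ) (k x : ℝ) :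
    HasDerivAt (planeWaveSum A B k)
      (I * k * (B * cexp (I * k * x) - A * cexp (-(I * k * x)))) x := by
  have hm := hasDerivAt_exp_mul_ofReal (-(I * k)) x
  have hp := hasDerivAt_exp_mul_ofReal (I * k) x
  simp only [neg_mul] at hm
  exact ((hm.const_mul A).add (hp.const_mul B)).congr_deriv (by ring)

theorem norm_deriv_planeWaveSum_sq_add (A B : ℂ) {k : ℝ} (hk : 0 ≤ k) (x : ℝ) :
    ‖deriv (planeWaveSum A B k) x‖ ^ 2 + k ^ 2 * ‖planeWaveSum A B k x‖ ^ 2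
      = 2 * k ^ 2 * (‖A‖ ^ 2 + ‖B‖ ^ 2) := by
  have hA : ‖A * cexp (-(I * k * x))‖ = ‖A‖ := by
    rw [norm_mul, norm_exp_neg_I_mul_ofReal_mul_ofReal, mul_one]
  have hB : ‖B * cexp (I * k * x)‖ = ‖B‖ := by
    rw [norm_mul, norm_exp_I_mul_ofReal_mul_ofReal, mul_one]
  have hIk : ‖I * (k : ℂ)‖ = k := by simp [abs_of_nonneg hk]
  rw [(hasDerivAt_planeWaveSum A B k x).deriv, planeWaveSum, norm_mul, hIk, norm_sub_rev, ← hA,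
    ← hB]
  linear_combination
    k ^ 2 * parallelogram_law_with_norm ℝ (A * cexp (-(I * k * x))) (B * cexp (I * k * x))

end PlaneWaves

section PML

variable {k σ₀ R Rh : ℝ} {f : ℝ → ℂ}

theorem stretch_of_abs_le {t : ℝ} (ht : |t| ≤ R) : stretch σ₀ R t = t := if_pos ht

theorem comp_stretch_mul_eq (hsupp : support f ⊆ Icc (-R) R) (φ : ℂ → ℂ) (t : ℝ) :
    φ (stretch σ₀ R t) * f t = φ t * f t := by
  by_cases ht : f t = 0
  · simp [ht]
  · rw [stretch_of_abs_le (abs_le.2 (hsupp ht))]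

theorem intervalIntegral_comp_stretch_mul (hsupp : support f ⊆ Icc (-R) R) (φ : ℂ → ℂ)
    (a b : ℝ) : ∫ t in a..b, φ (stretch σ₀ R t) * f t = ∫ t in a..b, φ t * f t :=
  intervalIntegral.integral_congr fun t _ => comp_stretch_mul_eq hsupp φ t

theorem support_mul_subset_of_subset {s : Set ℝ} (hsupp : support f ⊆ s) (φ : ℝ → ℂ) :
    support (fun t => φ t * f t) ⊆ s :=
  (support_mul_subset_right _ _).trans hsupp

theorem uhat_eq_usol_add_planeWaveSum (hsupp : support f ⊆ Icc (-R) R) (hRRh : R < Rh)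
    {x : ℝ} (hx : x ∈ Icc (-R) R) :
    uhat k σ₀ R Rh f x = usol k f x + planeWaveSum (D1 k σ₀ R Rh f) (D2 k σ₀ R Rh f) k x := by
  have hg := support_mul_subset_of_subset hsupp
  have h₁ : ∫ t in x..Rh, cexp (I * k * stretch σ₀ R t) * f t
      = ∫ t in Ioi x, cexp (I * k * t) * f t :=
    (intervalIntegral_comp_stretch_mul hsupp (fun z => cexp (I * k * z)) _ _).trans
      (setIntegral_Ioi_eq_intervalIntegral ((hg _).trans fun t ht => ht.2.trans hRRh.le)
        (hx.2.trans hRRh.le)).symm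
  have h₂ : ∫ t in (-Rh)..x, cexp (-(I * k * stretch σ₀ R t)) * f t
      = ∫ t in Iio x, cexp (-(I * k * t)) * f t :=
    (intervalIntegral_comp_stretch_mul hsupp (fun z => cexp (-(I * k * z))) _ _).trans
      (setIntegral_Iio_eq_intervalIntegral
        ((hg _).trans fun t ht => (neg_lt_neg hRRh).trans_le ht.1)
        ((neg_lt_neg hRRh).le.trans hx.1)).symm
  rw [uhat, usol, h₁, h₂, stretch_of_abs_le (abs_le.2 hx), planeWaveSum]
  ring

theorem differentiableAt_usol (hf : Continuous f) (hsupp : support f ⊆ Icc (-R) R) (x : ℝ) :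
    DifferentiableAt ℝ (usol k f) x := by
  have hg := support_mul_subset_of_subset hsupp
  have h₁ := (hasDerivAt_setIntegral_Ioi (g := fun t => cexp (I * k * t) * f t) (by fun_prop)
    ((hg _).trans Icc_subset_Iic_self) x).differentiableAt
  have h₂ := (hasDerivAt_setIntegral_Iio (g := fun t => cexp (-(I * k * t)) * f t) (by fun_prop)
    ((hg _).trans fun t ht => (sub_one_lt (-R)).trans_le ht.1) x).differentiableAt
  unfold usol
  fun_prop

theorem J1_eq_integral (hsupp : support f ⊆ Icc (-R) R) (hRRh : R < Rh) :
    J1 k σ₀ R Rh f = ∫ t : ℝ, cexp (-(I * k * t)) * f t :=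
  (intervalIntegral_comp_stretch_mul hsupp (fun z => cexp (-(I * k * z))) _ _).trans
    (intervalIntegral.integral_eq_integral_of_support_subset
      ((support_mul_subset_of_subset hsupp _).trans
        fun _ ht => ⟨(neg_lt_neg hRRh).trans_le ht.1, ht.2.trans hRRh.le⟩))

theorem J2_eq_integral (hsupp : support f ⊆ Icc (-R) R) (hRRh : R < Rh) :
    J2 k σ₀ R Rh f = ∫ t : ℝ, cexp (I * k * t) * f t :=
  (intervalIntegral_comp_stretch_mul hsupp (fun z => cexp (I * k * z)) _ _).trans
    (intervalIntegral.integral_eq_integral_of_support_subset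
      ((support_mul_subset_of_subset hsupp _).trans
        fun _ ht => ⟨(neg_lt_neg hRRh).trans_le ht.1, ht.2.trans hRRh.le⟩))

theorem usol_right_eq (hsupp : support f ⊆ Icc (-R) R) :
    usol k f R = -(1 / (2 * I * k)) * cexp (I * k * R) * ∫ t : ℝ, cexp (-(I * k * t)) * f t := by
  have hg (φ : ℝ → ℂ) : support (fun t => φ t * f t) ⊆ Iic R :=
    (support_mul_subset_of_subset hsupp φ).trans Icc_subset_Iic_self
  rw [usol, setIntegral_Ioi_eq_zero (hg fun t => cexp (I * k * t)),
    setIntegral_Iio_eq_integral (hg fun t => cexp (-(I * k * t)))]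
  ring

theorem usol_left_eq (hsupp : support f ⊆ Icc (-R) R) :
    usol k f (-R) = -(1 / (2 * I * k)) * cexp (I * k * R) * ∫ t : ℝ, cexp (I * k * t) * f t := by
  have hg (φ : ℝ → ℂ) : support (fun t => φ t * f t) ⊆ Ici (-R) :=
    (support_mul_subset_of_subset hsupp φ).trans Icc_subset_Ici_self
  rw [usol, setIntegral_Ioi_eq_integral (hg fun t => cexp (I * k * t)),
    setIntegral_Iio_eq_zero (hg fun t => cexp (-(I * k * t))), ofReal_neg, mul_neg, neg_neg,
    mul_zero, sub_zero]

theorem norm_one_div_two_I_mul (hk : 0 < k) : ‖(1 / (2 * I * k) : ℂ)‖ = 1 / (2 * k) := by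
  simp [abs_of_pos hk]

theorem norm_J1 (hk : 0 < k) (hsupp : support f ⊆ Icc (-R) R) (hRRh : R < Rh) :
    ‖J1 k σ₀ R Rh f‖ = 2 * k * ‖usol k f R‖ := by
  rw [usol_right_eq hsupp, J1_eq_integral hsupp hRRh, norm_mul, norm_mul, norm_neg,
    norm_one_div_two_I_mul hk, norm_exp_I_mul_ofReal_mul_ofReal]
  field_simp

theorem norm_J2 (hk : 0 < k) (hsupp : support f ⊆ Icc (-R) R) (hRRh : R < Rh) :
    ‖J2 k σ₀ R Rh f‖ = 2 * k * ‖usol k f (-R)‖ := by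
  rw [usol_left_eq hsupp, J2_eq_integral hsupp hRRh, norm_mul, norm_mul, norm_neg,
    norm_one_div_two_I_mul hk, norm_exp_I_mul_ofReal_mul_ofReal]
  field_simp

theorem norm_mul_sub_div_sub_inv_le {w a b : ℂ} (hw : ‖w‖ ≤ 1 / 2) :
    ‖(w * a - b) / (w - w⁻¹)‖ ≤ 2 * ‖w‖ * (‖a‖ + ‖b‖) := by
  rcases eq_or_ne w 0 with rfl | hw₀
  · simp
  have hq : 0 < ‖w‖ := norm_pos_iff.2 hw₀
  have hden : 1 / (2 * ‖w‖) ≤ ‖w - w⁻¹‖ :=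
    calc 1 / (2 * ‖w‖) ≤ ‖w‖⁻¹ - ‖w‖ := by
          rw [div_le_iff₀ (by positivity)]
          field_simp
          nlinarith
      _ = ‖w⁻¹‖ - ‖w‖ := by rw [norm_inv]
      _ ≤ ‖w - w⁻¹‖ := by rw [norm_sub_rev]; exact norm_sub_norm_le _ _
  have hnum : ‖w * a - b‖ ≤ ‖a‖ + ‖b‖ :=
    calc ‖w * a - b‖ ≤ ‖w‖ * ‖a‖ + ‖b‖ := (norm_sub_le _ _).trans_eq (by rw [norm_mul])
      _ ≤ ‖a‖ + ‖b‖ := by nlinarith [norm_nonneg a]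
  calc ‖(w * a - b) / (w - w⁻¹)‖ = ‖w * a - b‖ / ‖w - w⁻¹‖ := norm_div _ _
    _ ≤ (‖a‖ + ‖b‖) / (1 / (2 * ‖w‖)) := div_le_div₀ (by positivity) hnum (by positivity) hden
    _ = 2 * ‖w‖ * (‖a‖ + ‖b‖) := by field_simp

theorem norm_div_two_I_mul_exp_sub_exp_neg_le (hk : 0 < k) {E a b : ℂ} (hE : ‖cexp E‖ ≤ 1 / 2) :
    ‖1 / (2 * I * k) * (cexp E * a - b) / (cexp E - cexp (-E))‖
      ≤ ‖cexp E‖ / k * (‖a‖ + ‖b‖) := by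
  rw [mul_div_assoc, norm_mul, norm_one_div_two_I_mul hk, Complex.exp_neg]
  calc 1 / (2 * k) * ‖(cexp E * a - b) / (cexp E - (cexp E)⁻¹)‖
      ≤ 1 / (2 * k) * (2 * ‖cexp E‖ * (‖a‖ + ‖b‖)) := by
        gcongr; exact norm_mul_sub_div_sub_inv_le hE
    _ = ‖cexp E‖ / k * (‖a‖ + ‖b‖) := by field_simp

theorem norm_exp_two_I_mul_Rtil :
    ‖cexp (2 * I * k * Rtil σ₀ R Rh)‖ = Real.exp (-2 * k * σ₀ * (Rh - R)) := by
  rw [Rtil, Complex.norm_exp]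
  congr 1
  simp only [mul_re, re_ofNat, I_re, mul_zero, im_ofNat, I_im, mul_one, sub_self, ofReal_re,
    zero_mul, mul_im, add_zero, ofReal_im, add_re, sub_re, one_mul, zero_add, sub_im, add_im,
    zero_sub, neg_mul, neg_inj]
  ring

theorem norm_exp_two_I_mul_Rtil_le_half (hs : 1 ≤ k * σ₀ * (Rh - R)) :
    ‖cexp (2 * I * k * Rtil σ₀ R Rh)‖ ≤ 1 / 2 := by
  rw [norm_exp_two_I_mul_Rtil]
  calc Real.exp (-2 * k * σ₀ * (Rh - R)) ≤ Real.exp (-2) := Real.exp_le_exp.2 (by linarith)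
    _ ≤ 1 / 2 := by
      rw [Real.exp_neg, inv_le_comm₀ (Real.exp_pos 2) (by norm_num)]
      linarith [Real.add_one_le_exp 2]

theorem norm_D1_le (hk : 0 < k) (hs : 1 ≤ k * σ₀ * (Rh - R))
    (hsupp : support f ⊆ Icc (-R) R) (hRRh : R < Rh) :
    ‖D1 k σ₀ R Rh f‖
      ≤ 2 * Real.exp (-2 * k * σ₀ * (Rh - R)) * (‖usol k f R‖ + ‖usol k f (-R)‖) := by
  refine (norm_div_two_I_mul_exp_sub_exp_neg_le hk (norm_exp_two_I_mul_Rtil_le_half hs)).trans_eq ?_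
  rw [norm_exp_two_I_mul_Rtil, norm_J1 hk hsupp hRRh, norm_J2 hk hsupp hRRh]
  field_simp
  ring

theorem norm_D2_le (hk : 0 < k) (hs : 1 ≤ k * σ₀ * (Rh - R))
    (hsupp : support f ⊆ Icc (-R) R) (hRRh : R < Rh) :
    ‖D2 k σ₀ R Rh f‖
      ≤ 2 * Real.exp (-2 * k * σ₀ * (Rh - R)) * (‖usol k f R‖ + ‖usol k f (-R)‖) := by
  refine (norm_div_two_I_mul_exp_sub_exp_neg_le hk (norm_exp_two_I_mul_Rtil_le_half hs)).trans_eq ?_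
  rw [norm_exp_two_I_mul_Rtil, norm_J1 hk hsupp hRRh, norm_J2 hk hsupp hRRh]
  field_simp

theorem integral_energy_uhat_sub_usol (hk : 0 < k) (hf : Continuous f)
    (hsupp : support f ⊆ Icc (-R) R) (hR : 0 ≤ R) (hRRh : R < Rh) :
    ∫ x in (-R)..R, (‖deriv (uhat k σ₀ R Rh f) x - deriv (usol k f) x‖ ^ 2 +
        k ^ 2 * ‖uhat k σ₀ R Rh f x - usol k f x‖ ^ 2)
      = 2 * R * (2 * k ^ 2 * (‖D1 k σ₀ R Rh f‖ ^ 2 + ‖D2 k σ₀ R Rh f‖ ^ 2)) := by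
  have hpt : ∀ x ∈ Ioo (-R) R,
      ‖deriv (uhat k σ₀ R Rh f) x - deriv (usol k f) x‖ ^ 2 +
        k ^ 2 * ‖uhat k σ₀ R Rh f x - usol k f x‖ ^ 2
      = 2 * k ^ 2 * (‖D1 k σ₀ R Rh f‖ ^ 2 + ‖D2 k σ₀ R Rh f‖ ^ 2) := by
    intro x hx
    have heq : uhat k σ₀ R Rh f =ᶠ[𝓝 x]
        fun y => usol k f y + planeWaveSum (D1 k σ₀ R Rh f) (D2 k σ₀ R Rh f) k y :=
      Filter.eventually_of_mem (isOpen_Ioo.mem_nhds hx) fun y hy =>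
        uhat_eq_usol_add_planeWaveSum hsupp hRRh (Ioo_subset_Icc_self hy)
    rw [heq.deriv_eq, deriv_fun_add (differentiableAt_usol hf hsupp x)
      (hasDerivAt_planeWaveSum _ _ k x).differentiableAt,
      uhat_eq_usol_add_planeWaveSum hsupp hRRh (Ioo_subset_Icc_self hx),
      add_sub_cancel_left, add_sub_cancel_left]
    exact norm_deriv_planeWaveSum_sq_add _ _ hk.le x
  rw [intervalIntegral.integral_of_le (by linarith), setIntegral_congr_set Ioo_ae_eq_Ioc.symm,
    setIntegral_congr_fun measurableSet_Ioo hpt, setIntegral_const, smul_eq_mul,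
    Real.volume_real_Ioo_of_le (by linarith)]
  ring

end PML

/-- One-dimensional case of Theorem 3.4 (exponential convergence of the truncated PML
problem): if `f` is continuous with support contained in `[−R, R]` then on `[−R, R]` one has
`û − u = D₁ e^{−ikx} + D₂ e^{ikx}`, and there is an absolute constant `C > 0` such that if
`R̂ ≤ 2` and `k σ₀ L ≥ 1` then
`(∫_{−R}^{R} (|û′−u′|² + k²|û−u|²))^{1/2} ≤ C k e^{−2kσ₀L} (|u(R)|² + |u(−R)|²)^{1/2}`. -/
theorem pml_convergence_1d :
    ∃ C : ℝ, 0 < C ∧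
      ∀ (k σ₀ R Rh : ℝ) (f : ℝ → ℂ),
        0 < k → 0 < σ₀ → 0 < R → R < Rh →
        Continuous f → Function.support f ⊆ Set.Icc (-R) R →
        (∀ x ∈ Set.Icc (-R) R,
          uhat k σ₀ R Rh f x - usol k f x =
            D1 k σ₀ R Rh f * Complex.exp (-(Complex.I * k * x)) +
              D2 k σ₀ R Rh f * Complex.exp (Complex.I * k * x)) ∧
        (Rh ≤ 2 → 1 ≤ k * σ₀ * (Rh - R) →
          Real.sqrt (∫ x in (-R)..R,
              (‖deriv (uhat k σ₀ R Rh f) x - deriv (usol k f) x‖ ^ 2 +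
                k ^ 2 * ‖uhat k σ₀ R Rh f x - usol k f x‖ ^ 2)) ≤
            C * k * Real.exp (-2 * k * σ₀ * (Rh - R)) *
              Real.sqrt (‖usol k f R‖ ^ 2 + ‖usol k f (-R)‖ ^ 2)) := by
  refine ⟨12, by norm_num, fun k σ₀ R Rh f hk _ hR hRRh hf hsupp =>
    ⟨fun x hx => ?_, fun hRh hs => ?_⟩⟩
  · rw [uhat_eq_usol_add_planeWaveSum hsupp hRRh hx, add_sub_cancel_left, planeWaveSum]
  rw [integral_energy_uhat_sub_usol hk hf hsupp hR.le hRRh, Real.sqrt_le_left (by positivity),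
    mul_pow, Real.sq_sqrt (by positivity)]
  set q := Real.exp (-2 * k * σ₀ * (Rh - R))
  set a := ‖usol k f R‖
  set b := ‖usol k f (-R)‖
  have hD : ‖D1 k σ₀ R Rh f‖ ^ 2 + ‖D2 k σ₀ R Rh f‖ ^ 2 ≤ 16 * q ^ 2 * (a ^ 2 + b ^ 2) := by
    have h₁ := pow_le_pow_left₀ (norm_nonneg _) (norm_D1_le hk hs hsupp hRRh) 2
    have h₂ := pow_le_pow_left₀ (norm_nonneg _) (norm_D2_le hk hs hsupp hRRh) 2
    nlinarith [sq_nonneg (a - b), sq_nonneg q]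
  calc 2 * R * (2 * k ^ 2 * (‖D1 k σ₀ R Rh f‖ ^ 2 + ‖D2 k σ₀ R Rh f‖ ^ 2))
      ≤ 2 * 2 * (2 * k ^ 2 * (16 * q ^ 2 * (a ^ 2 + b ^ 2))) := by gcongr; linarith
    _ ≤ (12 * k * q) ^ 2 * (a ^ 2 + b ^ 2) := by
      nlinarith [sq_nonneg (k * q), sq_nonneg a, sq_nonneg b]
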